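/- Every finite Kripke frame (W, R, R_D) validating T_□ (□p→p), 4_□ (□p→□□p), D_□ ([∀]p→□p), B_D (p→[≠]⟨≠⟩p), 4_D ([∀]p→[≠][≠]p), and AT0, that is additionally a cone (R_D ∪ Id = W×W), gives rise via the Alexandroff topology on upward-closed sets to a topological space with selected points whose set of selected (R_D-irreflexive) points meets each R-cluster in at most one point. -/

import Mathlib

inductive Formula : Type where
  | var : Nat → Formula
  | bot : Formula
  | imp : Formula → Formula → Formula
  | box : Formula → Formula
  | dbox : Formula → Formula

def Formula.neg (φ : Formula) : Formula := .imp φ .bot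
def Formula.and (φ ψ : Formula) : Formula := .neg (.imp φ (.neg ψ))
def Formula.or (φ ψ : Formula) : Formula := .imp (.neg φ) ψ
def Formula.ddiam (φ : Formula) : Formula := .neg (.dbox (.neg φ))

/-- AT0 := (p ∧ [≠]¬p ∧ ⟨≠⟩(q ∧ [≠]¬q)) → (□¬q ∨ ⟨≠⟩(q ∧ □¬p)), with p = var 0, q = var 1. -/
def AT0 : Formula :=
  .imp (.and (.and (.var 0) (.dbox (.neg (.var 0))))
             (.ddiam (.and (.var 1) (.dbox (.neg (.var 1))))))
       (.or (.box (.neg (.var 1))) (.ddiam (.and (.var 1) (.box (.neg (.var 0))))))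

/-- Kripke semantics for the bimodal language: `□` via `R`, `[≠]` via `RD`. -/
def ksat {W : Type*} (R RD : W → W → Prop) (V : Nat → Set W) : W → Formula → Prop
  | x, .var p => x ∈ V p
  | _, .bot => False
  | x, .imp φ ψ => ksat R RD V x φ → ksat R RD V x ψ
  | x, .box φ => ∀ y, R x y → ksat R RD V y φ
  | x, .dbox φ => ∀ y, RD x y → ksat R RD V y φ

def Tsq : Formula := .imp (.box (.var 0)) (.var 0)
def Foursq : Formula := .imp (.box (.var 0)) (.box (.box (.var 0)))
def Dsq : Formula := .imp (.and (.dbox (.var 0)) (.var 0)) (.box (.var 0))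
def BD : Formula := .imp (.var 0) (.dbox (.ddiam (.var 0)))
def FourD : Formula := .imp (.and (.dbox (.var 0)) (.var 0)) (.dbox (.dbox (.var 0)))

theorem transitive_of_valid_foursq {W : Type*} {R RD : W → W → Prop}
    (h : ∀ (V : Nat → Set W) (x : W), ksat R RD V x Foursq) {x y z : W}
    (hxy : R x y) (hyz : R y z) : R x z :=
  h (fun _ => {w | R x w}) x (fun _ hw => hw) y hxy z hyz

/- Take `p` true exactly at `a` and `q` exactly at `b`: the antecedent of AT0 holds at `a`,
while `R a b` refutes `□¬q` and `R b a` refutes `⟨≠⟩(q ∧ □¬p)`. -/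
theorem refl_or_refl_of_valid_AT0 {W : Type*} {R RD : W → W → Prop}
    (h : ∀ (V : Nat → Set W) (x : W), ksat R RD V x AT0) {a b : W}
    (hD : RD a b) (hab : R a b) (hba : R b a) : RD a a ∨ RD b b := by
  by_contra! ⟨ha, hb⟩
  have hAT0 := h (fun n => if n = 0 then {a} else {b}) a
  simp [AT0, Formula.and, Formula.or, Formula.neg, Formula.ddiam, ksat, ha, hb, hD, hab, hba] at hAT0

abbrev upClosedTopology {W : Type*} (R : W → W → Prop) : TopologicalSpace W where
  IsOpen U := ∀ x ∈ U, ∀ y, R x y → y ∈ U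
  isOpen_univ _ _ _ _ := trivial
  isOpen_inter _ _ hs ht x hx y hxy := ⟨hs x hx.1 y hxy, ht x hx.2 y hxy⟩
  isOpen_sUnion _ hS _ := fun ⟨U, hU, hxU⟩ y hxy => ⟨U, hU, hS U hU _ hxU y hxy⟩

theorem stmt19_general {W : Type*} (R RD : W → W → Prop)
    (h4 : ∀ (V : Nat → Set W) (x : W), ksat R RD V x Foursq)
    (hAT0 : ∀ (V : Nat → Set W) (x : W), ksat R RD V x AT0)
    (hcone : ∀ x y : W, RD x y ∨ x = y) :
    ∃ T : TopologicalSpace W,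
      (∀ U : Set W, T.IsOpen U ↔ ∀ x ∈ U, ∀ y, R x y → y ∈ U) ∧
      ∀ x : W, ({v | ¬ RD v v} ∩ {y | R x y ∧ R y x}).Subsingleton := by
  refine ⟨upClosedTopology R, fun _ => Iff.rfl, ?_⟩
  rintro x a ⟨ha, hxa, hax⟩ b ⟨hb, hxb, hbx⟩
  by_contra hne
  have hab : R a b := transitive_of_valid_foursq h4 hax hxb
  have hba : R b a := transitive_of_valid_foursq h4 hbx hxa
  have hD : RD a b := (hcone a b).resolve_right hne
  exact (refl_or_refl_of_valid_AT0 hAT0 hD hab hba).elim ha hb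

/-- A finite cone frame validating T_□, 4_□, D_□, B_D, 4_D and AT0 gives rise,
via the Alexandroff topology of upward-closed sets, to a topological space with
selected points `{v | ¬ RD v v}` meeting each `R`-cluster in at most one
point. -/
theorem stmt19 {W : Type*} [Finite W] (R RD : W → W → Prop)
    (hT : ∀ (V : Nat → Set W) (x : W), ksat R RD V x Tsq)
    (h4 : ∀ (V : Nat → Set W) (x : W), ksat R RD V x Foursq)
    (hD : ∀ (V : Nat → Set W) (x : W), ksat R RD V x Dsq)
    (hB : ∀ (V : Nat → Set W) (x : W), ksat R RD V x BD)
    (h4D : ∀ (V : Nat → Set W) (x : W), ksat R RD V x FourD)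
    (hAT0 : ∀ (V : Nat → Set W) (x : W), ksat R RD V x AT0)
    (hcone : ∀ x y : W, RD x y ∨ x = y) :
    ∃ T : TopologicalSpace W,
      (∀ U : Set W, T.IsOpen U ↔ ∀ x ∈ U, ∀ y, R x y → y ∈ U) ∧
      ∀ x : W, ({v | ¬ RD v v} ∩ {y | R x y ∧ R y x}).Subsingleton :=
  stmt19_general R RD h4 hAT0 hcone
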